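/- Let μ, ν : ℝ → ℝ be functions continuous at 0 with μ₀ := μ(0) ≠ 0 and ν₀ := ν(0). For each t let P_t be the 4×4 matrix with rows (0,0,μ(t),0), (0,0,0,0), (0,0,0,μ(t)), (0,0,0,0) and Q_t the matrix with rows (0,ν(t),0,0), (0,t·ν(t),0,ν(t)), (0,0,0,0), (0,0,0,0). Then as t → 0, exp(P_t) converges to M₀(0,μ₀) and exp(Q_t) converges to M₀(ν₀,0), where M₀(x,y) is the matrix with rows (1,x,y,(x²+y²)/2), (0,1,0,x), (0,0,1,y), (0,0,0,1); and the resulting cusp shape (x₂ + i·y₂)/(x₁ + i·y₁) ∈ ℂ computed from the L₀-parameters (x₁,y₁) = (0,μ₀) of the first limit and (x₂,y₂) = (ν₀,0) of the second limit equals −i·ν₀/μ₀, which has real part zero. -/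

import Mathlib

/-!
The generators at `t = 0` lie in the Lie algebra of `L₀`: both are of the form `m₀ x y` below,
whose square is `(x² + y²) E₁₄` and whose cube vanishes, so the exponential series stops after
the quadratic term and gives exactly `M₀ x y`. Since the generators depend continuously on `t`
at `0` and the matrix exponential is continuous, the limits follow.
-/

open scoped Topology
open Complex

/-- The element `M₀(x,y)` of the Lie group `L₀`. -/
noncomputable def M₀ (x y : ℝ) : Matrix (Fin 4) (Fin 4) ℝ :=
  !![1, x, y, (x ^ 2 + y ^ 2) / 2;
     0, 1, 0, x;
     0, 0, 1, y;
     0, 0, 0, 1]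

open scoped Nat in
theorem NormedSpace.exp_eq_sum_range_of_pow_eq_zero (𝕂 : Type*) {𝔸 : Type*} [Field 𝕂]
    [CharZero 𝕂] [Ring 𝔸] [Algebra 𝕂 𝔸] [TopologicalSpace 𝔸] [IsTopologicalRing 𝔸]
    {a : 𝔸} {k : ℕ} (h : a ^ k = 0) :
    exp a = ∑ n ∈ Finset.range k, (n !⁻¹ : 𝕂) • a ^ n := by
  rw [exp_eq_tsum 𝕂]
  refine tsum_eq_sum fun n hn => ?_
  rw [pow_eq_zero_of_le (by simpa using hn) h, smul_zero]

theorem Matrix.continuous_exp {m 𝔸 : Type*} [Fintype m] [DecidableEq m] [NormedRing 𝔸]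
    [NormedAlgebra ℚ 𝔸] [CompleteSpace 𝔸] :
    Continuous (NormedSpace.exp : Matrix m m 𝔸 → Matrix m m 𝔸) :=
  @NormedSpace.exp_continuous _ Matrix.linftyOpNormedRing Matrix.linftyOpNormedAlgebra
    (inferInstanceAs (CompleteSpace (m → m → 𝔸)))

/-- The element of the Lie algebra of `L₀` with parameters `(x,y)`. -/
def m₀ (x y : ℝ) : Matrix (Fin 4) (Fin 4) ℝ :=
  !![0, x, y, 0;
     0, 0, 0, x;
     0, 0, 0, y;
     0, 0, 0, 0]

theorem m₀_sq (x y : ℝ) : m₀ x y ^ 2 = Matrix.single 0 3 (x ^ 2 + y ^ 2) := by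
  ext i j
  fin_cases i <;> fin_cases j <;> simp [m₀, sq, Matrix.mul_apply, Fin.sum_univ_four]

theorem m₀_pow_three (x y : ℝ) : m₀ x y ^ 3 = 0 := by
  rw [pow_succ, m₀_sq]
  ext i j
  fin_cases i <;> fin_cases j <;> simp [m₀, Matrix.mul_apply, Fin.sum_univ_four]

theorem exp_m₀ (x y : ℝ) : NormedSpace.exp (m₀ x y) = M₀ x y := by
  rw [NormedSpace.exp_eq_sum_range_of_pow_eq_zero ℝ (m₀_pow_three x y)]
  simp only [Finset.sum_range_succ, Finset.sum_range_zero, m₀_sq]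
  ext i j
  fin_cases i <;> fin_cases j <;> simp [m₀, M₀]
  ring

theorem tendsto_exp_nhds_M₀ {α : Type*} [TopologicalSpace α] {A : α → Matrix (Fin 4) (Fin 4) ℝ}
    {a : α} {x y : ℝ} (hA : ContinuousAt A a) (ha : A a = m₀ x y) :
    Filter.Tendsto (fun t => NormedSpace.exp (A t)) (𝓝 a) (𝓝 (M₀ x y)) := by
  rw [← exp_m₀, ← ha]
  exact (Matrix.continuous_exp.tendsto _).comp hA

/-- The cusp shape of a cusp whose generators map to `M₀ x₁ y₁` and `M₀ x₂ y₂`. -/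
noncomputable def cuspShape (x₁ y₁ x₂ y₂ : ℝ) : ℂ := (x₂ + I * y₂) / (x₁ + I * y₁)

theorem cuspShape_zero_zero (a b : ℝ) : cuspShape 0 b a 0 = -I * a / b := by
  simp [cuspShape, div_eq_mul_inv]
  ring

theorem re_cuspShape_zero_zero (a b : ℝ) : (cuspShape 0 b a 0).re = 0 := by
  simp [cuspShape_zero_zero]

theorem stmt_15_general (μ ν : ℝ → ℝ) (hμ : ContinuousAt μ 0) (hν : ContinuousAt ν 0) :
    Filter.Tendsto
      (fun t : ℝ => NormedSpace.exp
        (!![0, 0, μ t, 0;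
            0, 0, 0, 0;
            0, 0, 0, μ t;
            0, 0, 0, 0] : Matrix (Fin 4) (Fin 4) ℝ))
      (𝓝 0) (𝓝 (M₀ 0 (μ 0))) ∧
    Filter.Tendsto
      (fun t : ℝ => NormedSpace.exp
        (!![0, ν t, 0, 0;
            0, t * ν t, 0, ν t;
            0, 0, 0, 0;
            0, 0, 0, 0] : Matrix (Fin 4) (Fin 4) ℝ))
      (𝓝 0) (𝓝 (M₀ (ν 0) 0)) ∧
    ((ν 0 : ℂ) + I * (0 : ℝ)) / ((0 : ℝ) + I * (μ 0 : ℝ)) = -I * (ν 0) / (μ 0) ∧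
    (((ν 0 : ℂ) + I * (0 : ℝ)) / ((0 : ℝ) + I * (μ 0 : ℝ))).re = 0 :=
  ⟨tendsto_exp_nhds_M₀ (by fun_prop) rfl,
    tendsto_exp_nhds_M₀ (by fun_prop) (by simp [m₀]),
    cuspShape_zero_zero _ _, re_cuspShape_zero_zero _ _⟩

/-- Proposition 4.1 (computation): the exponentials of the pure-translation and
pure-dilation generators converge as `t → 0` to `M₀(0,μ₀)` and `M₀(ν₀,0)`, and the
resulting cusp shape `(ν₀ + i·0)/(0 + i·μ₀)` equals `−i·ν₀/μ₀`, which is purely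
imaginary. -/
theorem stmt_15 (μ ν : ℝ → ℝ) (hμ : ContinuousAt μ 0) (hν : ContinuousAt ν 0)
    (hμ0 : μ 0 ≠ 0) :
    Filter.Tendsto
      (fun t : ℝ => NormedSpace.exp
        (!![0, 0, μ t, 0;
            0, 0, 0, 0;
            0, 0, 0, μ t;
            0, 0, 0, 0] : Matrix (Fin 4) (Fin 4) ℝ))
      (𝓝 0) (𝓝 (M₀ 0 (μ 0))) ∧
    Filter.Tendsto
      (fun t : ℝ => NormedSpace.exp
        (!![0, ν t, 0, 0;
            0, t * ν t, 0, ν t;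
            0, 0, 0, 0;
            0, 0, 0, 0] : Matrix (Fin 4) (Fin 4) ℝ))
      (𝓝 0) (𝓝 (M₀ (ν 0) 0)) ∧
    ((ν 0 : ℂ) + I * (0 : ℝ)) / ((0 : ℝ) + I * (μ 0 : ℝ)) = -I * (ν 0) / (μ 0) ∧
    (((ν 0 : ℂ) + I * (0 : ℝ)) / ((0 : ℝ) + I * (μ 0 : ℝ))).re = 0 :=
  stmt_15_general μ ν hμ hν
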